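/- arXiv:2205.01993 — 4 statements merged into one kernel-verified Lean document; each statement's English description precedes it below -/
import Mathlib

section
/- Suppose Ω ⊂ ℍ is an h-convex domain and E is an h-convex open subset of Ω. Then the function ψ_E(p) = −d̃_H(p, ℍ∖E), p ∈ Ω, is continuous and h-quasiconvex in Ω. -/
noncomputable section

/-- The underlying space of the first Heisenberg group: `ℝ³`. -/
abbrev Heis := ℝ × ℝ × ℝ

/-- Heisenberg group multiplication. -/
def hmul (p q : Heis) : Heis :=
  (p.1 + q.1, p.2.1 + q.2.1, p.2.2 + q.2.2 + (p.1 * q.2.1 - q.1 * p.2.1) / 2)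

/-- Heisenberg group inverse. -/
def hinv (p : Heis) : Heis := (-p.1, -p.2.1, -p.2.2)

/-- The horizontal plane `ℍ_p = p · ℍ₀` through `p`. -/
def hplane (p : Heis) : Set Heis := {q | ∃ h : Heis, h.2.2 = 0 ∧ q = hmul p h}

/-- The (Euclidean) segment `[p,q]`. -/
def hseg (p q : Heis) : Set Heis :=
  {w | ∃ l : ℝ, 0 ≤ l ∧ l ≤ 1 ∧ w = (1 - l) • p + l • q}

/-- The half-open segment `(p,q]`. -/
def hsegHalfOpen (p q : Heis) : Set Heis :=
  {w | ∃ l : ℝ, 0 < l ∧ l ≤ 1 ∧ w = (1 - l) • p + l • q}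

/-- A set `E ⊆ ℍ` is h-convex if for every `p ∈ E` and `q ∈ ℍ_p ∩ E`,
the horizontal segment `[p,q]` lies in `E`. -/
def IsHConvex (E : Set Heis) : Prop :=
  ∀ p ∈ E, ∀ q ∈ hplane p, q ∈ E → ∀ w ∈ hseg p q, w ∈ E

/-- A set `E` is h-convex up to boundary if for every `p ∈ ∂E` and `q ∈ ℍ_p ∩ E`,
the half-open segment `(p,q]` lies in `E`. -/
def IsHConvexUpToBoundary (E : Set Heis) : Prop :=
  ∀ p ∈ frontier E, ∀ q ∈ hplane p, q ∈ E → ∀ w ∈ hsegHalfOpen p q, w ∈ E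

/-- A function `u` is h-quasiconvex on `Ω` if `u(w) ≤ max (u p) (u q)` for all
`p ∈ Ω`, `q ∈ ℍ_p ∩ Ω` and `w ∈ [p,q]`. -/
def IsHQuasiconvexOn (Ω : Set Heis) (u : Heis → ℝ) : Prop :=
  ∀ p ∈ Ω, ∀ q ∈ hplane p, q ∈ Ω → ∀ w ∈ hseg p q, u w ≤ max (u p) (u q)

/-- `Qf` is the h-quasiconvex envelope of `f` on `Ω`: the greatest h-quasiconvex
function majorized by `f` on `Ω` (equivalently, the pointwise supremum of all
h-quasiconvex minorants of `f`). -/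
def IsHQCEnvelopeOn (Ω : Set Heis) (f Qf : Heis → ℝ) : Prop :=
  IsHQuasiconvexOn Ω Qf ∧ (∀ p ∈ Ω, Qf p ≤ f p) ∧
    ∀ g : Heis → ℝ, IsHQuasiconvexOn Ω g → (∀ p ∈ Ω, g p ≤ f p) → ∀ p ∈ Ω, g p ≤ Qf p

/-- The Korányi gauge. -/
def kGauge (p : Heis) : ℝ := ((p.1 ^ 2 + p.2.1 ^ 2) ^ 2 + 16 * p.2.2 ^ 2) ^ ((1 : ℝ) / 4)

/-- The left-invariant gauge metric `d_H(p,q) = |p⁻¹ · q|_G`. -/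
def dLeft (p q : Heis) : ℝ := kGauge (hmul (hinv p) q)

/-- The right-invariant gauge metric `d̃_H(p,q) = |p · q⁻¹|_G`. -/
def dRight (p q : Heis) : ℝ := kGauge (hmul p (hinv q))

/-- The gauge ball `B_r(p) = {q : |p⁻¹ · q|_G < r}`. -/
def gball (p : Heis) (r : ℝ) : Set Heis := {q | dLeft p q < r}

/-- The horizontal gradient `∇_H φ(p) = (X₁ φ(p), X₂ φ(p))`, where
`X₁ = ∂_x − (y/2) ∂_z` and `X₂ = ∂_y + (x/2) ∂_z`. -/
def hGrad (φ : Heis → ℝ) (p : Heis) : ℝ × ℝ :=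
  (fderiv ℝ φ p ((1, 0, -p.2.1 / 2) : Heis), fderiv ℝ φ p ((0, 1, p.1 / 2) : Heis))

/-- The pairing `⟨∇_H φ(p), (p⁻¹ · ξ)_h⟩`. -/
def hpair (φ : Heis → ℝ) (p ξ : Heis) : ℝ :=
  (hGrad φ p).1 * (hmul (hinv p) ξ).1 + (hGrad φ p).2 * (hmul (hinv p) ξ).2.1

/-- Local boundedness of `u` on `A`. -/
def LocBddOn (A : Set Heis) (u : Heis → ℝ) : Prop :=
  ∀ p ∈ A, ∃ s ∈ nhds p, ∃ C : ℝ, ∀ q ∈ s ∩ A, |u q| ≤ C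

/-- `u` is a viscosity subsolution of `u + H(p, u, ∇_H u) = f` in `Ω`, where
`H(p, u, ∇_H u) = sup {⟨∇_H u(p), (p⁻¹·ξ)_h⟩ : ξ ∈ ℍ_p ∩ Ω, u(ξ) < u(p)}`
(with the supremum understood to be `0` when `∇_H φ(p) = 0`). -/
def IsSubSoln (Ω : Set Heis) (f u : Heis → ℝ) : Prop :=
  UpperSemicontinuousOn u Ω ∧ LocBddOn Ω u ∧
    ∀ p ∈ Ω, ∀ φ : Heis → ℝ, ContDiff ℝ 1 φ →
      IsMaxOn (fun q => u q - φ q) Ω p →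
        (∀ ξ ∈ hplane p, ξ ∈ Ω → u ξ < u p → u p + hpair φ p ξ ≤ f p) ∧
        (hGrad φ p = 0 → u p ≤ f p)

/-- `u` is a viscosity supersolution of `u + H(p, u, ∇_H u) = f` in `Ω`, where for
supersolutions `H(p, u, ∇_H u) = sup {⟨∇_H u(p), (p⁻¹·ξ)_h⟩ : ξ ∈ ℍ_p ∩ Ω, u(ξ) ≤ u(p)}`.
(The set `Ŝ_p(u)` always contains `p` itself, so the inequality
`u(p) + sup ≥ f(p)` is expressed in ε-form.) -/
def IsSuperSoln (Ω : Set Heis) (f u : Heis → ℝ) : Prop :=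
  LowerSemicontinuousOn u Ω ∧ LocBddOn Ω u ∧
    ∀ p ∈ Ω, ∀ φ : Heis → ℝ, ContDiff ℝ 1 φ →
      IsMinOn (fun q => u q - φ q) Ω p →
        ∀ ε > 0, ∃ ξ ∈ hplane p, ξ ∈ Ω ∧ u ξ ≤ u p ∧ f p - ε ≤ u p + hpair φ p ξ

/-- `w` is the upper semicontinuous envelope of `v` on `A`: the smallest
upper semicontinuous function on `A` that majorizes `v`. -/
def IsUscEnvOn (A : Set Heis) (v w : Heis → ℝ) : Prop :=
  UpperSemicontinuousOn w A ∧ (∀ q ∈ A, v q ≤ w q) ∧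
    ∀ z : Heis → ℝ, UpperSemicontinuousOn z A → (∀ q ∈ A, v q ≤ z q) → ∀ q ∈ A, w q ≤ z q

/-- `w` is the lower semicontinuous envelope of `v` on `A`: the largest
lower semicontinuous function on `A` minorized by `v`. -/
def IsLscEnvOn (A : Set Heis) (v w : Heis → ℝ) : Prop :=
  LowerSemicontinuousOn w A ∧ (∀ q ∈ A, w q ≤ v q) ∧
    ∀ z : Heis → ℝ, LowerSemicontinuousOn z A → (∀ q ∈ A, z q ≤ v q) → ∀ q ∈ A, z q ≤ w q

/-- The h-convex hull of `E`: the intersection of all h-convex sets containing `E`. -/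
def hconvexHull (E : Set Heis) : Set Heis := ⋂₀ {D : Set Heis | IsHConvex D ∧ E ⊆ D}

/-- The direct convexification operator
`T[f](w) = inf {max (f p) (f q) : w ∈ [p,q], p ∈ Ω, q ∈ Ω ∩ ℍ_p}`. -/
def Tconv (Ω : Set Heis) (f : Heis → ℝ) : Heis → ℝ := fun w =>
  sInf {y | ∃ p ∈ Ω, ∃ q ∈ hplane p, q ∈ Ω ∧ w ∈ hseg p q ∧ y = max (f p) (f q)}


/-!
`d̃_H` is a right-invariant metric, so `d̃_H(·, ℍ∖E)` is 1-Lipschitz for it, hence continuous.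
For quasiconvexity, let `w ∈ [p, q]` and suppose some `ζ ∉ E` had `d̃_H(w, ζ)` below the distances
of `p` and `q` to `ℍ∖E`. Left translation by `ζ · w⁻¹` moves every point by exactly `d̃_H(w, ζ)`,
so it carries `p` and `q` into `E`; it maps horizontal planes and segments to horizontal planes
and segments, so by h-convexity of `E` it carries `w` into `E`, but it carries `w` onto `ζ`.
-/

/-- Cygan: for `p = (z, t)`, `|p|_G² = ‖|z|² + 4it‖`, and by `cyganC_hmul` this complex quantity
is subadditive up to a cross term bounded by `2 |z| |z'|`. -/
def cyganC (a : Heis) : ℂ := ((a.1 ^ 2 + a.2.1 ^ 2 : ℝ) : ℂ) + ((4 * a.2.2 : ℝ) : ℂ) * Complex.I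

def horizC (a : Heis) : ℂ := (a.1 : ℂ) + (a.2.1 : ℂ) * Complex.I

lemma cyganC_hmul (a b : Heis) :
    cyganC (hmul a b) = cyganC a + cyganC b + 2 * starRingEnd ℂ (horizC a) * horizC b := by
  apply Complex.ext <;>
    simp only [cyganC, horizC, hmul, Complex.add_re, Complex.add_im, Complex.mul_re,
      Complex.mul_im, Complex.conj_re, Complex.conj_im, Complex.ofReal_re, Complex.ofReal_im,
      Complex.I_re, Complex.I_im, Complex.re_ofNat, Complex.im_ofNat] <;>
    ring

lemma norm_cyganC (a : Heis) :
    ‖cyganC a‖ = √((a.1 ^ 2 + a.2.1 ^ 2) ^ 2 + 16 * a.2.2 ^ 2) := by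
  rw [Complex.norm_def, Complex.normSq_apply]
  simp only [cyganC, Complex.add_re, Complex.add_im, Complex.mul_re, Complex.mul_im,
    Complex.ofReal_re, Complex.ofReal_im, Complex.I_re, Complex.I_im]
  ring_nf

lemma kGauge_eq_sqrt_norm_cyganC (a : Heis) : kGauge a = √‖cyganC a‖ := by
  rw [norm_cyganC, kGauge, show (1 : ℝ) / 4 = 1 / 2 * (1 / 2) by norm_num,
    Real.rpow_mul (by positivity), ← Real.sqrt_eq_rpow, ← Real.sqrt_eq_rpow]

lemma norm_horizC_le_kGauge (a : Heis) : ‖horizC a‖ ≤ kGauge a := by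
  rw [kGauge_eq_sqrt_norm_cyganC, Complex.norm_def]
  refine Real.sqrt_le_sqrt ((Complex.re_le_norm (cyganC a)).trans_eq' ?_)
  simp [Complex.normSq_apply, cyganC, horizC, sq]

lemma kGauge_nonneg (a : Heis) : 0 ≤ kGauge a := Real.rpow_nonneg (by positivity) _

lemma kGauge_hmul_le (a b : Heis) : kGauge (hmul a b) ≤ kGauge a + kGauge b := by
  have hsq : ∀ c, ‖cyganC c‖ = kGauge c ^ 2 := fun c => by
    rw [kGauge_eq_sqrt_norm_cyganC, Real.sq_sqrt (norm_nonneg _)]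
  have hcross : ‖2 * starRingEnd ℂ (horizC a) * horizC b‖ ≤ 2 * (kGauge a * kGauge b) := by
    rw [norm_mul, norm_mul, Complex.norm_conj, Complex.norm_two, mul_assoc]
    exact mul_le_mul_of_nonneg_left (mul_le_mul (norm_horizC_le_kGauge a)
      (norm_horizC_le_kGauge b) (norm_nonneg _) (kGauge_nonneg a)) zero_le_two
  have hnorm : ‖cyganC (hmul a b)‖ ≤ (kGauge a + kGauge b) ^ 2 := by
    rw [cyganC_hmul]
    calc _ ≤ ‖cyganC a‖ + ‖cyganC b‖ + ‖2 * starRingEnd ℂ (horizC a) * horizC b‖ :=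
          norm_add₃_le
      _ ≤ (kGauge a + kGauge b) ^ 2 := by rw [hsq, hsq]; linarith
  rw [hsq] at hnorm
  exact le_of_pow_le_pow_left₀ two_ne_zero (add_nonneg (kGauge_nonneg a) (kGauge_nonneg b)) hnorm

lemma kGauge_hinv (a : Heis) : kGauge (hinv a) = kGauge a := by
  simp [kGauge, hinv]

lemma continuous_kGauge : Continuous kGauge := by
  simp_rw [funext kGauge_eq_sqrt_norm_cyganC, cyganC]
  fun_prop

lemma dRight_nonneg (p q : Heis) : 0 ≤ dRight p q := kGauge_nonneg _

lemma dRight_self (p : Heis) : dRight p p = 0 := by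
  simp [dRight, kGauge, hmul, hinv]

lemma dRight_comm (p q : Heis) : dRight p q = dRight q p := by
  rw [dRight, dRight, ← kGauge_hinv]
  congr 1
  simp only [hmul, hinv, Prod.mk.injEq]
  refine ⟨by ring, by ring, by ring⟩

lemma dRight_triangle (p q r : Heis) : dRight p r ≤ dRight p q + dRight q r := by
  have : hmul p (hinv r) = hmul (hmul p (hinv q)) (hmul q (hinv r)) := by
    simp only [hmul, hinv, Prod.mk.injEq]
    refine ⟨by ring, by ring, by ring⟩
  rw [dRight, this]
  exact kGauge_hmul_le _ _

lemma dRight_hmul_self (h x : Heis) : dRight x (hmul h x) = kGauge h := by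
  rw [dRight, ← kGauge_hinv h]
  congr 1
  simp only [hmul, hinv, Prod.mk.injEq]
  refine ⟨by ring, by ring, by ring⟩

lemma continuous_dRight_left (q : Heis) : Continuous fun p => dRight p q := by
  unfold dRight hmul hinv
  exact continuous_kGauge.comp (by fun_prop)

lemma hmul_mem_hplane {p q : Heis} (h : Heis) (hq : q ∈ hplane p) :
    hmul h q ∈ hplane (hmul h p) := by
  obtain ⟨δ, hδ, rfl⟩ := hq
  refine ⟨δ, hδ, ?_⟩
  simp only [hmul, Prod.mk.injEq]
  refine ⟨by ring, by ring, by ring⟩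

lemma hmul_mem_hseg {p q w : Heis} (h : Heis) (hw : w ∈ hseg p q) :
    hmul h w ∈ hseg (hmul h p) (hmul h q) := by
  obtain ⟨l, hl0, hl1, rfl⟩ := hw
  refine ⟨l, hl0, hl1, ?_⟩
  ext <;> simp only [hmul, Prod.fst_add, Prod.snd_add, Prod.smul_fst, Prod.smul_snd,
    smul_eq_mul] <;> ring

lemma IsHConvex.preimage_hmul {E : Set Heis} (hE : IsHConvex E) (h : Heis) :
    IsHConvex (hmul h ⁻¹' E) :=
  fun _ hp _ hq hqE _ hw => hE _ hp _ (hmul_mem_hplane h hq) hqE _ (hmul_mem_hseg h hw)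

def gaugeInfDist (A : Set Heis) (p : Heis) : ℝ := sInf (dRight p '' A)

lemma bddBelow_image_dRight (A : Set Heis) (p : Heis) : BddBelow (dRight p '' A) :=
  ⟨0, by rintro _ ⟨q, -, rfl⟩; exact dRight_nonneg p q⟩

lemma gaugeInfDist_le_add (A : Set Heis) (p p' : Heis) :
    gaugeInfDist A p ≤ dRight p p' + gaugeInfDist A p' := by
  rcases A.eq_empty_or_nonempty with rfl | hA
  · simpa [gaugeInfDist] using dRight_nonneg p p'
  rw [← sub_le_iff_le_add']
  refine le_csInf (hA.image _) ?_
  rintro _ ⟨q, hq, rfl⟩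
  have : gaugeInfDist A p ≤ dRight p q :=
    csInf_le (bddBelow_image_dRight A p) (Set.mem_image_of_mem _ hq)
  linarith [dRight_triangle p p' q]

lemma abs_gaugeInfDist_sub_le (A : Set Heis) (p p' : Heis) :
    |gaugeInfDist A p - gaugeInfDist A p'| ≤ dRight p p' := by
  rw [abs_sub_le_iff]
  constructor
  · linarith [gaugeInfDist_le_add A p p']
  · linarith [gaugeInfDist_le_add A p' p, dRight_comm p p']

lemma continuous_gaugeInfDist (A : Set Heis) : Continuous (gaugeInfDist A) := by
  refine continuous_iff_continuousAt.2 fun p => tendsto_iff_norm_sub_tendsto_zero.2 ?_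
  have hd : Filter.Tendsto (fun p' => dRight p' p) (nhds p) (nhds 0) := by
    simpa [dRight_self] using (continuous_dRight_left p).tendsto p
  exact squeeze_zero (fun _ => norm_nonneg _) (fun p' => abs_gaugeInfDist_sub_le A p' p) hd

lemma mem_of_dRight_lt_gaugeInfDist_compl {E : Set Heis} {p q : Heis}
    (h : dRight p q < gaugeInfDist Eᶜ p) : q ∈ E := by
  by_contra hq
  exact (csInf_le (bddBelow_image_dRight _ p) (Set.mem_image_of_mem _ hq)).not_gt h

lemma IsHConvex.min_gaugeInfDist_compl_le {E : Set Heis} (hE : IsHConvex E) {p q w : Heis}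
    (hq : q ∈ hplane p) (hw : w ∈ hseg p q) :
    min (gaugeInfDist Eᶜ p) (gaugeInfDist Eᶜ q) ≤ gaugeInfDist Eᶜ w := by
  rcases Eᶜ.eq_empty_or_nonempty with hA | hA
  · simp [gaugeInfDist, hA]
  refine le_csInf (hA.image _) ?_
  rintro _ ⟨ζ, hζ, rfl⟩
  by_contra! hlt
  set h := hmul ζ (hinv w)
  have hmoved : ∀ x, dRight w ζ < gaugeInfDist Eᶜ x → hmul h x ∈ E := fun x hx =>
    mem_of_dRight_lt_gaugeInfDist_compl <| by
      rwa [dRight_hmul_self, show kGauge h = dRight w ζ from dRight_comm ζ w]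
  have hhw : hmul h w = ζ := by
    ext <;> simp only [h, hmul, hinv] <;> ring
  refine hζ (hhw ▸ hE.preimage_hmul h p (hmoved p ?_) q hq (hmoved q ?_) w hw)
  exacts [hlt.trans_le (min_le_left _ _), hlt.trans_le (min_le_right _ _)]

lemma IsHConvex.isHQuasiconvexOn_neg_gaugeInfDist_compl {E : Set Heis} (hE : IsHConvex E)
    (Ω : Set Heis) : IsHQuasiconvexOn Ω fun p => -gaugeInfDist Eᶜ p :=
  fun _ _ _ hq _ _ hw => by
    rw [max_neg_neg, neg_le_neg_iff]
    exact hE.min_gaugeInfDist_compl_le hq hw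

theorem metric_based_hquasiconvex_general
    (Ω : Set Heis) (E : Set Heis) (hEhc : IsHConvex E) :
    ContinuousOn (fun p => -sInf {r : ℝ | ∃ q, q ∉ E ∧ r = dRight p q}) Ω ∧
    IsHQuasiconvexOn Ω (fun p => -sInf {r : ℝ | ∃ q, q ∉ E ∧ r = dRight p q}) := by
  have hψ : (fun p => -sInf {r : ℝ | ∃ q, q ∉ E ∧ r = dRight p q})
      = fun p => -gaugeInfDist Eᶜ p := by
    ext p
    simp only [gaugeInfDist, Set.image, Set.mem_compl_iff, eq_comm]
  rw [hψ]
  exact ⟨(continuous_gaugeInfDist Eᶜ).neg.continuousOn,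
    hEhc.isHQuasiconvexOn_neg_gaugeInfDist_compl Ω⟩

/-- Proposition 2.5 (A metric-based h-quasiconvex function): if `E` is an
h-convex open subset of an h-convex domain `Ω`, then
`ψ_E(p) = −d̃_H(p, ℍ∖E)` is continuous and h-quasiconvex in `Ω`. -/
theorem metric_based_hquasiconvex
    (Ω : Set Heis) (hΩo : IsOpen Ω) (hΩconn : IsConnected Ω) (hΩhc : IsHConvex Ω)
    (E : Set Heis) (hEo : IsOpen E) (hEhc : IsHConvex E) (hEΩ : E ⊆ Ω) :
    ContinuousOn (fun p => -sInf {r : ℝ | ∃ q, q ∉ E ∧ r = dRight p q}) Ω ∧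
    IsHQuasiconvexOn Ω (fun p => -sInf {r : ℝ | ∃ q, q ∉ E ∧ r = dRight p q}) :=
  metric_based_hquasiconvex_general Ω E hEhc
end
end

section
/- Let Ω be an h-convex domain in ℍ and f : Ω → ℝ be bounded from below. Define the convexification operator T[f](w) = inf{max{f(p), f(q)} : w ∈ [p,q], p ∈ Ω, q ∈ Ω ∩ ℍ_p} for w ∈ Ω. Then the iterates Tⁿ[f] converge pointwise in Ω to the h-quasiconvex envelope Q(f) as n → ∞. -/
noncomputable section

/-!
Every value `max (u p) (u q)` competing in `T[u](w)` dominates `g w` for any h-quasiconvex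
minorant `g` of `u`, so `T` preserves h-quasiconvex minorants; the choice `p = q = w` gives
`T[u] ≤ u`. Hence the iterates `Tⁿ[f]` decrease and stay above `Q(f)`, so they converge to
their infimum `g ≥ Q(f)`. Passing to the limit in `Tⁿ⁺¹[f](w) ≤ max (Tⁿ[f](p)) (Tⁿ[f](q))`
shows that `g` is h-quasiconvex, and `g ≤ f`, so `g ≤ Q(f)`.
-/

lemma mem_hplane_self (p : Heis) : p ∈ hplane p :=
  ⟨0, rfl, by simp [hmul]⟩

lemma left_mem_hseg (p q : Heis) : p ∈ hseg p q :=
  ⟨0, le_rfl, zero_le_one, by simp⟩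

section Tconv

variable {Ω : Set Heis} {g u : Heis → ℝ}

lemma IsHQuasiconvexOn.le_max_of_le {p q w : Heis} (hg : IsHQuasiconvexOn Ω g)
    (hgu : ∀ p ∈ Ω, g p ≤ u p) (hp : p ∈ Ω) (hq : q ∈ hplane p) (hqΩ : q ∈ Ω)
    (hw : w ∈ hseg p q) : g w ≤ max (u p) (u q) :=
  (hg p hp q hq hqΩ w hw).trans (max_le_max (hgu p hp) (hgu q hqΩ))

lemma Tconv_le_max {p q w : Heis} (hg : IsHQuasiconvexOn Ω g) (hgu : ∀ p ∈ Ω, g p ≤ u p)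
    (hp : p ∈ Ω) (hq : q ∈ hplane p) (hqΩ : q ∈ Ω) (hw : w ∈ hseg p q) :
    Tconv Ω u w ≤ max (u p) (u q) := by
  -- `g w` bounds the defining set from below; without such a bound `sInf` would be junk.
  refine csInf_le ⟨g w, ?_⟩ ⟨p, hp, q, hq, hqΩ, hw, rfl⟩
  rintro _ ⟨p', hp', q', hq', hq'Ω, hw', rfl⟩
  exact hg.le_max_of_le hgu hp' hq' hq'Ω hw'

lemma Tconv_le_self {w : Heis} (hg : IsHQuasiconvexOn Ω g) (hgu : ∀ p ∈ Ω, g p ≤ u p)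
    (hw : w ∈ Ω) : Tconv Ω u w ≤ u w := by
  simpa using Tconv_le_max hg hgu hw (mem_hplane_self w) hw (left_mem_hseg w w)

lemma IsHQuasiconvexOn.le_Tconv (hg : IsHQuasiconvexOn Ω g) (hgu : ∀ p ∈ Ω, g p ≤ u p) :
    ∀ w ∈ Ω, g w ≤ Tconv Ω u w := by
  intro w hw
  refine le_csInf ⟨_, w, hw, w, mem_hplane_self w, hw, left_mem_hseg w w, rfl⟩ ?_
  rintro _ ⟨p, hp, q, hq, hqΩ, hwpq, rfl⟩
  exact hg.le_max_of_le hgu hp hq hqΩ hwpq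

lemma IsHQuasiconvexOn.le_iterate_Tconv (hg : IsHQuasiconvexOn Ω g)
    (hgu : ∀ p ∈ Ω, g p ≤ u p) (n : ℕ) : ∀ w ∈ Ω, g w ≤ (Tconv Ω)^[n] u w := by
  induction n with
  | zero => exact hgu
  | succ n ih =>
    rw [Function.iterate_succ_apply']
    exact hg.le_Tconv ih

lemma antitone_iterate_Tconv {w : Heis} (hg : IsHQuasiconvexOn Ω g)
    (hgu : ∀ p ∈ Ω, g p ≤ u p) (hw : w ∈ Ω) :
    Antitone fun n => (Tconv Ω)^[n] u w := by
  refine antitone_nat_of_succ_le fun n => ?_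
  rw [Function.iterate_succ_apply']
  exact Tconv_le_self hg (hg.le_iterate_Tconv hgu n) hw

lemma bddBelow_range_iterate_Tconv {w : Heis} (hg : IsHQuasiconvexOn Ω g)
    (hgu : ∀ p ∈ Ω, g p ≤ u p) (hw : w ∈ Ω) :
    BddBelow (Set.range fun n => (Tconv Ω)^[n] u w) :=
  ⟨g w, by rintro _ ⟨n, rfl⟩; exact hg.le_iterate_Tconv hgu n w hw⟩

lemma tendsto_iterate_Tconv_iInf {w : Heis} (hg : IsHQuasiconvexOn Ω g)
    (hgu : ∀ p ∈ Ω, g p ≤ u p) (hw : w ∈ Ω) :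
    Filter.Tendsto (fun n => (Tconv Ω)^[n] u w) Filter.atTop
      (nhds (⨅ n, (Tconv Ω)^[n] u w)) :=
  tendsto_atTop_ciInf (antitone_iterate_Tconv hg hgu hw) (bddBelow_range_iterate_Tconv hg hgu hw)

lemma isHQuasiconvexOn_iInf_iterate_Tconv (hΩ : IsHConvex Ω) (hg : IsHQuasiconvexOn Ω g)
    (hgu : ∀ p ∈ Ω, g p ≤ u p) :
    IsHQuasiconvexOn Ω fun w => ⨅ n, (Tconv Ω)^[n] u w := by
  intro p hp q hq hqΩ w hw
  have hwΩ : w ∈ Ω := hΩ p hp q hq hqΩ w hw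
  refine ge_of_tendsto ((tendsto_iterate_Tconv_iInf hg hgu hp).max
    (tendsto_iterate_Tconv_iInf hg hgu hqΩ)) (Filter.Eventually.of_forall fun n => ?_)
  calc ⨅ n, (Tconv Ω)^[n] u w
      ≤ (Tconv Ω)^[n + 1] u w := ciInf_le (bddBelow_range_iterate_Tconv hg hgu hwΩ) (n + 1)
    _ ≤ max ((Tconv Ω)^[n] u p) ((Tconv Ω)^[n] u q) := by
      rw [Function.iterate_succ_apply']
      exact Tconv_le_max hg (hg.le_iterate_Tconv hgu n) hp hq hqΩ hw

end Tconv

theorem direct_convexification_iterates_general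
    (Ω : Set Heis) (hΩhc : IsHConvex Ω)
    (f : Heis → ℝ)
    (Qf : Heis → ℝ) (hQf : IsHQCEnvelopeOn Ω f Qf) :
    ∀ w ∈ Ω, Filter.Tendsto (fun n : ℕ => (Tconv Ω)^[n] f w) Filter.atTop (nhds (Qf w)) := by
  obtain ⟨hQqc, hQf_le, hQ_max⟩ := hQf
  have hlim_le_f : ∀ w ∈ Ω, ⨅ n, (Tconv Ω)^[n] f w ≤ f w := fun w hw =>
    ciInf_le (bddBelow_range_iterate_Tconv hQqc hQf_le hw) 0
  have hlim_eq : ∀ w ∈ Ω, ⨅ n, (Tconv Ω)^[n] f w = Qf w := fun w hw =>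
    le_antisymm
      (hQ_max _ (isHQuasiconvexOn_iInf_iterate_Tconv hΩhc hQqc hQf_le) hlim_le_f w hw)
      (le_ciInf fun n => hQqc.le_iterate_Tconv hQf_le n w hw)
  intro w hw
  rw [← hlim_eq w hw]
  exact tendsto_iterate_Tconv_iInf hQqc hQf_le hw

/-- Theorem 2.11 (Iterative scheme with direct convexification): if `f` is
bounded from below on an h-convex domain `Ω`, then the iterates `Tⁿ[f]`
converge pointwise in `Ω` to the h-quasiconvex envelope `Q(f)`. -/
theorem direct_convexification_iterates
    (Ω : Set Heis) (hΩo : IsOpen Ω) (hΩconn : IsConnected Ω) (hΩhc : IsHConvex Ω)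
    (f : Heis → ℝ) (hbdd : ∃ c : ℝ, ∀ p ∈ Ω, c ≤ f p)
    (Qf : Heis → ℝ) (hQf : IsHQCEnvelopeOn Ω f Qf) :
    ∀ w ∈ Ω, Filter.Tendsto (fun n : ℕ => (Tconv Ω)^[n] f w) Filter.atTop (nhds (Qf w)) :=
  direct_convexification_iterates_general Ω hΩhc f Qf hQf
end
end

section
/- Let Ω be a bounded domain in ℍ and f ∈ C(Ω). Let u ∈ USC(Ω̄) be a viscosity subsolution and v ∈ LSC(Ω̄) be a viscosity supersolution of u + H(p,u,∇_H u) = f in Ω. Assume in addition that u ≤ v = K on ∂Ω and u ≤ K in Ω̄ for some K ∈ ℝ. Then u ≤ v in Ω̄. -/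
noncomputable section

/-!
Suppose `θ := u p₀ - v p₀ > 0`; by the boundary condition `p₀ ∈ Ω`. Doubling the variables with the
penalty `d |x · y⁻¹|_G⁴`, `d → ∞`, gives maximizers `(m · q, q)` with `m → 0` that accumulate inside
`Ω`. There the subsolution test gives `u ≤ f` at `m · q`, so the supersolution test at `q` yields
`η ∈ ℍ_q` with `v η ≤ v q` and a positive pairing. Were `m · η ∈ Ω`, the pairing would contradict
either the subsolution inequality at `m · q` or the maximality of `(m · q, q)`, made strict by
breaking ties with a linear function. Hence `m · η ∉ Ω`, and in the limit `η` reaches `∂Ω`, where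
`v = K`, although `v η ≤ K - θ` all along.
-/

open Filter Topology

section Group

lemma hmul_assoc (a b c : Heis) : hmul (hmul a b) c = hmul a (hmul b c) := by
  ext <;> simp only [hmul] <;> ring

lemma hinv_hmul_cancel_left (q h : Heis) : hmul (hinv q) (hmul q h) = h := by
  ext <;> simp only [hmul, hinv] <;> ring

lemma hmul_hinv_cancel_right (m q : Heis) : hmul (hmul m q) (hinv q) = m := by
  ext <;> simp only [hmul, hinv] <;> ring

lemma hmul_hinv_hmul (p q : Heis) : hmul (hmul p (hinv q)) q = p := by
  ext <;> simp only [hmul, hinv] <;> ring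

lemma hmul_hinv_self (p : Heis) : hmul p (hinv p) = 0 := by
  ext <;> simp only [hmul, hinv, Prod.fst_zero, Prod.snd_zero] <;> ring

lemma zero_hmul (q : Heis) : hmul 0 q = q := by
  ext <;> simp only [hmul, Prod.fst_zero, Prod.snd_zero] <;> ring

lemma hmul_horizontal (p : Heis) (a b : ℝ) :
    hmul p (a, b, 0) = p + (a • ((1, 0, -p.2.1 / 2) : Heis) + b • ((0, 1, p.1 / 2) : Heis)) := by
  ext <;> simp only [hmul, Prod.fst_add, Prod.snd_add, Prod.smul_mk, smul_eq_mul] <;> ring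

@[fun_prop]
lemma Continuous.hmul {X : Type*} [TopologicalSpace X] {f g : X → Heis} (hf : Continuous f)
    (hg : Continuous g) : Continuous fun x => hmul (f x) (g x) := by
  unfold _root_.hmul; fun_prop

end Group

/-- `kGauge z ^ 4`, written as a polynomial. -/
def gauge4 (z : Heis) : ℝ := (z.1 ^ 2 + z.2.1 ^ 2) ^ 2 + 16 * z.2.2 ^ 2

lemma gauge4_nonneg (z : Heis) : 0 ≤ gauge4 z := by unfold gauge4; positivity

@[simp]
lemma gauge4_zero : gauge4 0 = 0 := by simp [gauge4]

@[fun_prop]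
lemma continuous_gauge4 : Continuous gauge4 := by unfold gauge4; fun_prop

lemma gauge4_hmul_hinv_comm (p q : Heis) : gauge4 (hmul p (hinv q)) = gauge4 (hmul q (hinv p)) := by
  simp only [gauge4, hmul, hinv]; ring

lemma norm_lt_of_gauge4_lt {z : Heis} {ε : ℝ} (hε : 0 < ε) (hz : gauge4 z < min (ε ^ 4) (ε ^ 2)) :
    ‖z‖ < ε := by
  have hz4 := hz.trans_le (min_le_left _ _)
  have hz2 := hz.trans_le (min_le_right _ _)
  unfold gauge4 at hz4 hz2
  have hx : z.1 ^ 2 < ε ^ 2 := by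
    refine lt_of_pow_lt_pow_left₀ 2 (by positivity) ?_
    nlinarith [sq_nonneg z.2.1, sq_nonneg z.2.2, sq_nonneg z.1]
  have hy : z.2.1 ^ 2 < ε ^ 2 := by
    refine lt_of_pow_lt_pow_left₀ 2 (by positivity) ?_
    nlinarith [sq_nonneg z.2.1, sq_nonneg z.2.2, sq_nonneg z.1]
  have hz : z.2.2 ^ 2 < ε ^ 2 := by nlinarith [sq_nonneg (z.1 ^ 2 + z.2.1 ^ 2)]
  simp only [Prod.norm_def, Real.norm_eq_abs, max_lt_iff]
  exact ⟨abs_lt_of_sq_lt_sq hx hε.le, abs_lt_of_sq_lt_sq hy hε.le, abs_lt_of_sq_lt_sq hz hε.le⟩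

lemma tendsto_zero_of_tendsto_gauge4 {α : Type*} {l : Filter α} {m : α → Heis}
    (h : Tendsto (fun n => gauge4 (m n)) l (𝓝 0)) : Tendsto m l (𝓝 0) :=
  Metric.tendsto_nhds.2 fun ε hε =>
    (h.eventually_lt_const (show (0 : ℝ) < min (ε ^ 4) (ε ^ 2) by positivity)).mono fun _ hn => by
      simpa using norm_lt_of_gauge4_lt hε hn

section Penalty

def penalty (c : ℝ) (a x : Heis) : ℝ := c * gauge4 (hmul x (hinv a))

def penaltyHGrad (c : ℝ) (p a : Heis) : ℝ × ℝ :=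
  (c * (4 * (p.1 - a.1) * ((p.1 - a.1) ^ 2 + (p.2.1 - a.2.1) ^ 2)
      - 16 * (p.2.2 - a.2.2 - (p.1 * a.2.1 - a.1 * p.2.1) / 2) * (p.2.1 + a.2.1)),
   c * (4 * (p.2.1 - a.2.1) * ((p.1 - a.1) ^ 2 + (p.2.1 - a.2.1) ^ 2)
      + 16 * (p.2.2 - a.2.2 - (p.1 * a.2.1 - a.1 * p.2.1) / 2) * (p.1 + a.1)))

lemma penaltyHGrad_neg_swap (c : ℝ) (p q : Heis) : penaltyHGrad (-c) q p = penaltyHGrad c p q := by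
  ext <;> simp only [penaltyHGrad] <;> ring

lemma penalty_neg_swap (c : ℝ) (p q : Heis) : penalty (-c) p q = -penalty c q p := by
  simp only [penalty, gauge4_hmul_hinv_comm q p]; ring

lemma penalty_hmul (d : ℝ) (m q : Heis) : penalty d q (hmul m q) = d * gauge4 m := by
  rw [penalty, hmul_hinv_cancel_right]

lemma contDiff_penalty (c : ℝ) (a : Heis) : ContDiff ℝ 1 (penalty c a) := by
  unfold penalty gauge4 hmul hinv; fun_prop

lemma hGrad_penalty (c : ℝ) (a p : Heis) : hGrad (penalty c a) p = penaltyHGrad c p a := by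
  have h1 : HasFDerivAt (fun x : Heis => x.1) (ContinuousLinearMap.fst ℝ ℝ (ℝ × ℝ)) p :=
    hasFDerivAt_fst
  have h2 : HasFDerivAt (fun x : Heis => x.2.1)
      ((ContinuousLinearMap.fst ℝ ℝ ℝ).comp (ContinuousLinearMap.snd ℝ ℝ (ℝ × ℝ))) p :=
    hasFDerivAt_fst.comp p hasFDerivAt_snd
  have h3 : HasFDerivAt (fun x : Heis => x.2.2)
      ((ContinuousLinearMap.snd ℝ ℝ ℝ).comp (ContinuousLinearMap.snd ℝ ℝ (ℝ × ℝ))) p :=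
    hasFDerivAt_snd.comp p hasFDerivAt_snd
  have hx := h1.sub_const a.1
  have hy := h2.sub_const a.2.1
  have hz := (h3.sub_const a.2.2).add
    (((h1.mul_const a.2.1).sub (h2.const_mul a.1)).mul_const (-(1 / 2)))
  have hE := (hx.mul hx).add (hy.mul hy)
  have hF := ((hE.mul hE).add ((hz.mul hz).const_mul 16)).const_mul c
  have hpen : HasFDerivAt (penalty c a) _ p := hF.congr_of_eventuallyEq <| .of_forall fun x => by
    simp only [penalty, gauge4, hmul, hinv, Pi.add_apply, Pi.mul_apply, Pi.sub_apply]; ring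
  simp only [hGrad, hpen.fderiv, penaltyHGrad]
  ext <;> simp <;> ring

lemma hpair_penalty (c : ℝ) (a p h : Heis) :
    hpair (penalty c a) p (hmul p h) =
      (penaltyHGrad c p a).1 * h.1 + (penaltyHGrad c p a).2 * h.2.1 := by
  rw [hpair, hGrad_penalty, hinv_hmul_cancel_left]

/-- A linear function of `q` whose increments along the horizontal plane `ℍ_q` are the pairings
with the horizontal gradient of the penalty at `(m · q, q)`. -/
def tieBreak (d : ℝ) (m q : Heis) : ℝ :=
  (d * 4 * m.1 * (m.1 ^ 2 + m.2.1 ^ 2) - d * 16 * m.2.2 * m.2.1) * q.1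
  + (d * 4 * m.2.1 * (m.1 ^ 2 + m.2.1 ^ 2) + d * 16 * m.2.2 * m.1) * q.2.1
  + 64 * d * m.2.2 * q.2.2

@[fun_prop]
lemma continuous_tieBreak (d : ℝ) (m : Heis) : Continuous (tieBreak d m) := by
  unfold tieBreak; fun_prop

lemma tieBreak_hmul_sub (d : ℝ) (m q h : Heis) (hh : h.2.2 = 0) :
    tieBreak d m (hmul q h) - tieBreak d m q =
      (penaltyHGrad d (hmul m q) q).1 * h.1 + (penaltyHGrad d (hmul m q) q).2 * h.2.1 := by
  simp only [tieBreak, penaltyHGrad, hmul, hh]; ring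

end Penalty

lemma HasDerivAt.eventually_lt_of_neg {g : ℝ → ℝ} {g' a : ℝ} (hg : HasDerivAt g g' a)
    (hneg : g' < 0) : ∀ᶠ t in 𝓝[>] a, g t < g a := by
  have hslope := (hasDerivAt_iff_tendsto_slope.1 hg).mono_left
    (nhdsWithin_mono a fun t (ht : a < t) => ht.ne')
  filter_upwards [hslope.eventually_lt_const hneg, self_mem_nhdsWithin] with t ht (hat : a < t)
  rw [slope_def_field, div_neg_iff] at ht
  rcases ht with ⟨-, h⟩ | ⟨h, -⟩
  · linarith
  · linarith

lemma fderiv_apply_horizontal (φ : Heis → ℝ) (p : Heis) (a b : ℝ) :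
    fderiv ℝ φ p (a • ((1, 0, -p.2.1 / 2) : Heis) + b • ((0, 1, p.1 / 2) : Heis)) =
      a * (hGrad φ p).1 + b * (hGrad φ p).2 := by
  rw [map_add, map_smul, map_smul, hGrad, smul_eq_mul, smul_eq_mul]

/-- If `∇_H φ(p) ≠ 0`, moving from `p` against `∇_H φ(p)` inside `ℍ_p` strictly lowers `u`, and the
pairing in the subsolution inequality is then `-t |∇_H φ(p)|²`, which tends to `0`. -/
theorem IsSubSoln.le_of_isMaxOn {Ω : Set Heis} {f u φ : Heis → ℝ} {p : Heis}
    (hsub : IsSubSoln Ω f u) (hΩ : IsOpen Ω) (hp : p ∈ Ω) (hφ : ContDiff ℝ 1 φ)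
    (hmax : IsMaxOn (fun x => u x - φ x) Ω p) : u p ≤ f p := by
  obtain ⟨hdesc, hcrit⟩ := hsub.2.2 p hp φ hφ hmax
  set σ := hGrad φ p
  by_cases hσ : σ = 0
  · exact hcrit hσ
  set S := σ.1 ^ 2 + σ.2 ^ 2
  have hS : 0 < S := by
    have : σ.1 ≠ 0 ∨ σ.2 ≠ 0 := by
      by_contra! h
      exact hσ (Prod.ext h.1 h.2)
    rcases this with h | h <;> positivity
  set V : Heis := (-σ.1) • ((1, 0, -p.2.1 / 2) : Heis) + (-σ.2) • ((0, 1, p.1 / 2) : Heis)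
  have hline : ∀ t : ℝ, p + t • V = hmul p (t * -σ.1, t * -σ.2, 0) := fun t => by
    rw [hmul_horizontal, smul_add, smul_smul, smul_smul]
  have hderiv : HasDerivAt (fun t : ℝ => φ (p + t • V)) (-S) 0 := by
    have hV : fderiv ℝ φ p V = -S := by rw [fderiv_apply_horizontal]; ring
    rw [← hV]
    refine (hφ.differentiable one_ne_zero p).hasFDerivAt.comp_hasDerivAt_of_eq 0 ?_ (by simp)
    simpa using ((hasDerivAt_id (0 : ℝ)).smul_const V).const_add p
  have hmemΩ : ∀ᶠ t in 𝓝[>] (0 : ℝ), p + t • V ∈ Ω := by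
    have : Tendsto (fun t : ℝ => p + t • V) (𝓝 0) (𝓝 p) :=
      (continuous_const.add (continuous_id.smul continuous_const)).tendsto' 0 p (by simp)
    exact (this.eventually (hΩ.mem_nhds hp)).filter_mono nhdsWithin_le_nhds
  have hbound : ∀ᶠ t in 𝓝[>] (0 : ℝ), u p ≤ f p + t * S := by
    filter_upwards [(hderiv.eventually_lt_of_neg (neg_neg_of_pos hS)), hmemΩ] with t hφt htΩ
    simp only [zero_smul, add_zero] at hφt
    have hut : u (p + t • V) < u p := by
      have := hmax htΩ
      simp only [Set.mem_ofPred_eq] at this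
      linarith
    rw [hline] at hut htΩ
    have := hdesc _ ⟨_, rfl, rfl⟩ htΩ hut
    rw [hpair, hinv_hmul_cancel_left] at this
    linarith
  have hlim : Tendsto (fun t : ℝ => f p + t * S) (𝓝[>] 0) (𝓝 (f p)) := by
    have : Tendsto (fun t : ℝ => f p + t * S) (𝓝 0) (𝓝 (f p + 0 * S)) :=
      tendsto_const_nhds.add (tendsto_id.mul_const S)
    simpa using this.mono_left nhdsWithin_le_nhds
  exact ge_of_tendsto hlim hbound

section Semicontinuity

variable {X : Type*} [TopologicalSpace X] {s : Set X} {u v : X → ℝ}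

lemma UpperSemicontinuousOn.sub_prod (hu : UpperSemicontinuousOn u s)
    (hv : LowerSemicontinuousOn v s) :
    UpperSemicontinuousOn (fun w : X × X => u w.1 - v w.2) (s ×ˢ s) := by
  have hneg : UpperSemicontinuousOn (fun x => -v x) s :=
    continuous_neg.comp_lowerSemicontinuousOn_antitone hv fun _ _ h => neg_le_neg h
  simpa only [sub_eq_add_neg, Function.comp_def] using
    (hu.comp continuousOn_fst fun _ hw => hw.1).add (hneg.comp continuousOn_snd fun _ hw => hw.2)

lemma UpperSemicontinuousOn.le_sub_of_tendsto [T2Space X] (hs : IsCompact s)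
    (hu : UpperSemicontinuousOn u s) (hv : LowerSemicontinuousOn v s) {a b : ℕ → X} {x : X}
    {θ : ℝ} (ha : ∀ n, a n ∈ s) (hb : ∀ n, b n ∈ s) (hax : Tendsto a atTop (𝓝 x))
    (hbx : Tendsto b atTop (𝓝 x)) (hθ : ∀ n, θ ≤ u (a n) - v (b n)) : θ ≤ u x - v x :=
  (((hu.sub_prod hv).isCompact_inter_preimage_Ici (hs.prod hs) θ).isClosed.mem_of_tendsto
    (hax.prodMk_nhds hbx) (.of_forall fun n => ⟨⟨ha n, hb n⟩, hθ n⟩)).2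

end Semicontinuity

lemma exists_subseq_tendsto_hmul {S : Set Heis} (hS : IsCompact S) {a m : ℕ → Heis}
    (ha : ∀ n, a n ∈ S) (hm : Tendsto m atTop (𝓝 0)) :
    ∃ x ∈ S, ∃ φ : ℕ → ℕ, StrictMono φ ∧ Tendsto (a ∘ φ) atTop (𝓝 x) ∧
      Tendsto (fun k => hmul (m (φ k)) (a (φ k))) atTop (𝓝 x) := by
  obtain ⟨x, hx, φ, hφ, hax⟩ := hS.tendsto_subseq ha
  refine ⟨x, hx, φ, hφ, hax, ?_⟩
  simpa only [zero_hmul, Function.comp_def] using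
    ((continuous_fst.hmul continuous_snd).tendsto ((0 : Heis), x)).comp
      ((hm.comp hφ.tendsto_atTop).prodMk_nhds hax)

lemma exists_mem_frontier_le_of_hmul_not_mem {Ω : Set Heis} (hcpt : IsCompact (closure Ω))
    {v : Heis → ℝ} (hv : LowerSemicontinuousOn v (closure Ω)) {c : ℝ} {m η : ℕ → Heis}
    (hm : Tendsto m atTop (𝓝 0)) (hη : ∀ n, η n ∈ Ω) (hmη : ∀ n, hmul (m n) (η n) ∉ Ω)
    (hvη : ∀ n, v (η n) ≤ c) : ∃ x ∈ frontier Ω, v x ≤ c := by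
  obtain ⟨x, -, φ, -, hηx, hmηx⟩ :=
    exists_subseq_tendsto_hmul hcpt (fun n => subset_closure (hη n)) hm
  have hx := (hv.isCompact_inter_preimage_Iic hcpt c).isClosed.mem_of_tendsto hηx
    (.of_forall fun k => ⟨subset_closure (hη (φ k)), hvη (φ k)⟩)
  refine ⟨x, ?_, hx.2⟩
  rw [frontier_eq_closure_inter_closure]
  exact ⟨hx.1, mem_closure_of_tendsto hmηx (.of_forall fun k => hmη (φ k))⟩

section Doubling

/-- `(m · q, q)` maximizes the doubling functional `(x, y) ↦ u x - v y - d |x · y⁻¹|_G⁴` on `s × s`,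
and among the maximizers of the form `(m · η, η)` it is one with the largest `tieBreak d m η`. -/
structure IsDoublingMax (s : Set Heis) (u v : Heis → ℝ) (d : ℝ) (m q : Heis) : Prop where
  hmul_mem : hmul m q ∈ s
  mem : q ∈ s
  le : ∀ x ∈ s, ∀ y ∈ s, u x - v y - penalty d y x ≤ u (hmul m q) - v q - d * gauge4 m
  tieBreak_le : ∀ η ∈ s, hmul m η ∈ s → u (hmul m q) - v q ≤ u (hmul m η) - v η →
    tieBreak d m η ≤ tieBreak d m q

variable {s : Set Heis} {u v : Heis → ℝ}

theorem IsDoublingMax.exists (hs : IsCompact s) (hne : s.Nonempty)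
    (hu : UpperSemicontinuousOn u s) (hv : LowerSemicontinuousOn v s) (d : ℝ) :
    ∃ m q, IsDoublingMax s u v d m q := by
  set Φ : Heis × Heis → ℝ := fun w => u w.1 - v w.2 - penalty d w.2 w.1
  have hΦ : UpperSemicontinuousOn Φ (s ×ˢ s) := by
    have hpen : Continuous fun w : Heis × Heis => -penalty d w.2 w.1 := by
      unfold penalty hinv; fun_prop
    simpa only [Φ, sub_eq_add_neg] using
      (hu.sub_prod hv).add hpen.continuousOn.upperSemicontinuousOn
  obtain ⟨z, hz, hzmax⟩ := hΦ.exists_isMaxOn (hne.prod hne) (hs.prod hs)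
  set m := hmul z.1 (hinv z.2)
  have hT : IsCompact (s ×ˢ s ∩ Φ ⁻¹' Set.Ici (Φ z) ∩ {w | w.1 = hmul m w.2}) :=
    (hΦ.isCompact_inter_preimage_Ici (hs.prod hs) _).inter_right
      (isClosed_eq continuous_fst (by fun_prop))
  obtain ⟨⟨p, q⟩, ⟨⟨hws, hwΦ⟩, hpq⟩, hwmax⟩ := hT.exists_isMaxOn
    ⟨z, ⟨hz, (le_refl (Φ z) : _)⟩, (hmul_hinv_hmul _ _).symm⟩
    ((continuous_tieBreak d m).comp continuous_snd).continuousOn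
  obtain rfl : p = hmul m q := hpq
  have hΦmq : ∀ η, Φ (hmul m η, η) = u (hmul m η) - v η - d * gauge4 m := fun η => by
    simp only [Φ, penalty_hmul]
  refine ⟨m, q, hws.1, hws.2, fun x hx y hy => ?_, fun η hη hmη hle => ?_⟩
  · have : Φ (x, y) ≤ Φ z := hzmax ⟨hx, hy⟩
    have : Φ z ≤ Φ (hmul m q, q) := hwΦ
    rw [hΦmq] at this
    linarith
  · refine hwmax (a := (hmul m η, η)) ⟨⟨⟨hmη, hη⟩, ?_⟩, rfl⟩
    have : Φ z ≤ Φ (hmul m q, q) := hwΦ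
    show Φ z ≤ Φ (hmul m η, η)
    rw [hΦmq] at this ⊢
    linarith

lemma IsDoublingMax.sub_add_le {d : ℝ} {m q : Heis} (h : IsDoublingMax s u v d m q) {p₀ : Heis}
    (hp₀ : p₀ ∈ s) : u p₀ - v p₀ + d * gauge4 m ≤ u (hmul m q) - v q := by
  have := h.le p₀ hp₀ p₀ hp₀
  rw [penalty, hmul_hinv_self, gauge4_zero, mul_zero, sub_zero] at this
  linarith

theorem tendsto_zero_of_isDoublingMax (hs : IsCompact s) (hu : UpperSemicontinuousOn u s)
    (hv : LowerSemicontinuousOn v s) {p₀ : Heis} (hp₀ : p₀ ∈ s) {m q : ℕ → Heis}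
    (h : ∀ n : ℕ, IsDoublingMax s u v (n + 1) (m n) (q n)) : Tendsto m atTop (𝓝 0) := by
  obtain ⟨A, hA⟩ := hu.bddAbove_of_isCompact hs
  obtain ⟨B, hB⟩ := hv.bddBelow_of_isCompact hs
  have hbound : ∀ n : ℕ, gauge4 (m n) ≤ (A - B - (u p₀ - v p₀)) / (n + 1) := fun n => by
    rw [le_div_iff₀ (by positivity)]
    linarith [(h n).sub_add_le hp₀, hA ⟨_, (h n).hmul_mem, rfl⟩, hB ⟨_, (h n).mem, rfl⟩]
  refine tendsto_zero_of_tendsto_gauge4 (squeeze_zero (fun n => gauge4_nonneg _) hbound ?_)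
  simpa only [Function.comp_def, Nat.cast_add, Nat.cast_one] using
    (tendsto_const_div_atTop_nhds_zero_nat (A - B - (u p₀ - v p₀))).comp (tendsto_add_atTop_nat 1)

/-- The point `η ∈ ℍ_q` comes from the supersolution property at `q`. If `m · η ∈ Ω`, either
`u (m · η) < u (m · q)` and the subsolution property at `m · q` applies to `m · η ∈ ℍ_{m·q}`, or
`(m · η, η)` is another maximizer with a larger value of `tieBreak d m`. -/
theorem IsDoublingMax.exists_hmul_not_mem {Ω : Set Heis} {f : Heis → ℝ} {d : ℝ} {m q : Heis}
    (h : IsDoublingMax s u v d m q) (hΩs : Ω ⊆ s) (hΩ : IsOpen Ω) (hsub : IsSubSoln Ω f u)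
    (hsuper : IsSuperSoln Ω f v) (hp : hmul m q ∈ Ω) (hq : q ∈ Ω)
    (hf : f (hmul m q) - f q < u (hmul m q) - v q) :
    ∃ η ∈ Ω, v η ≤ v q ∧ hmul m η ∉ Ω := by
  set p := hmul m q
  have hmaxφ : IsMaxOn (fun x => u x - penalty d q x) Ω p := fun x hx => by
    have := h.le x (hΩs hx) q (hΩs hq)
    simp only [Set.mem_ofPred_eq, p, penalty_hmul]
    linarith
  have hminψ : IsMinOn (fun y => v y - penalty (-d) p y) Ω q := fun y hy => by
    have := h.le p (hΩs hp) y (hΩs hy)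
    simp only [Set.mem_ofPred_eq, penalty_neg_swap, p, penalty_hmul]
    linarith
  have hup : u p ≤ f p := hsub.le_of_isMaxOn hΩ hp (contDiff_penalty d q) hmaxφ
  set δ := u p - v q - (f p - f q)
  obtain ⟨_, ⟨k, hk, rfl⟩, hηΩ, hvη, hfη⟩ :=
    hsuper.2.2 q hq _ (contDiff_penalty (-d) p) hminψ (δ / 2) (by linarith)
  rw [hpair_penalty, penaltyHGrad_neg_swap] at hfη
  set A := (penaltyHGrad d p q).1 * k.1 + (penaltyHGrad d p q).2 * k.2.1
  have hA : 0 < A := by linarith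
  refine ⟨hmul q k, hηΩ, hvη, fun hξΩ => ?_⟩
  rw [← hmul_assoc] at hξΩ
  by_cases hlt : u (hmul p k) < u p
  · have := (hsub.2.2 p hp _ (contDiff_penalty d q) hmaxφ).1 _ ⟨k, hk, rfl⟩ hξΩ hlt
    rw [hpair_penalty] at this
    linarith
  · have := h.tieBreak_le _ (hΩs hηΩ) (hΩs (by rwa [← hmul_assoc]))
      (by rw [← hmul_assoc]; linarith)
    rw [← sub_nonpos, tieBreak_hmul_sub d m q k hk] at this
    linarith

end Doubling

theorem exists_subseq_mem_and_sub_lt {Ω : Set Heis} {f u v : Heis → ℝ} (hΩ : IsOpen Ω)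
    (hcpt : IsCompact (closure Ω)) (hf : ContinuousOn f Ω)
    (hu : UpperSemicontinuousOn u (closure Ω)) (hv : LowerSemicontinuousOn v (closure Ω))
    (hbdry : ∀ p ∈ frontier Ω, u p ≤ v p) {m q : ℕ → Heis} (hm : Tendsto m atTop (𝓝 0))
    (hp : ∀ n, hmul (m n) (q n) ∈ closure Ω) (hq : ∀ n, q n ∈ closure Ω) {θ : ℝ} (hθ0 : 0 < θ)
    (hθ : ∀ n, θ ≤ u (hmul (m n) (q n)) - v (q n)) :
    ∃ φ : ℕ → ℕ, StrictMono φ ∧ ∀ k, hmul (m (φ k)) (q (φ k)) ∈ Ω ∧ q (φ k) ∈ Ω ∧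
      f (hmul (m (φ k)) (q (φ k))) - f (q (φ k)) < θ := by
  obtain ⟨x, hx, φ, hφ, hqx, hpx⟩ := exists_subseq_tendsto_hmul hcpt hq hm
  have hxΩ : x ∈ Ω := by
    by_contra h
    have := hu.le_sub_of_tendsto hcpt hv (fun k => hp (φ k)) (fun k => hq (φ k)) hpx hqx
      fun k => hθ (φ k)
    linarith [hbdry x (hΩ.frontier_eq ▸ ⟨hx, h⟩)]
  have hfx := (hf.continuousAt (hΩ.mem_nhds hxΩ)).tendsto
  have hfpq := (hfx.comp hpx).sub (hfx.comp hqx)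
  rw [sub_self] at hfpq
  obtain ⟨N, hN⟩ := eventually_atTop.1
    ((hpx.eventually (hΩ.mem_nhds hxΩ)).and
      ((hqx.eventually (hΩ.mem_nhds hxΩ)).and (hfpq.eventually_lt_const hθ0)))
  exact ⟨fun k => φ (k + N), fun a b hab => hφ (by omega), fun k => hN (k + N) (by omega)⟩

theorem comparison_principle_general
    (Ω : Set Heis) (hΩo : IsOpen Ω)
    (hΩb : Bornology.IsBounded Ω)
    (f : Heis → ℝ) (hf : ContinuousOn f Ω)
    (u v : Heis → ℝ)
    (husc : UpperSemicontinuousOn u (closure Ω))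
    (hvlsc : LowerSemicontinuousOn v (closure Ω))
    (hsub : IsSubSoln Ω f u) (hsuper : IsSuperSoln Ω f v)
    (K : ℝ)
    (hbdry : ∀ p ∈ frontier Ω, u p ≤ v p ∧ v p = K)
    (huK : ∀ p ∈ closure Ω, u p ≤ K) :
    ∀ p ∈ closure Ω, u p ≤ v p := by
  intro p₀ hp₀
  by_contra! hlt
  have hcpt := hΩb.isCompact_closure
  have hp₀Ω : p₀ ∈ Ω := by
    by_contra h
    linarith [(hbdry p₀ (hΩo.frontier_eq ▸ ⟨hp₀, h⟩)).1]
  set θ := u p₀ - v p₀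
  choose m q hmq using fun n : ℕ => IsDoublingMax.exists hcpt ⟨p₀, hp₀⟩ husc hvlsc (n + 1)
  have hm := tendsto_zero_of_isDoublingMax hcpt husc hvlsc hp₀ hmq
  have hθ : ∀ n, θ ≤ u (hmul (m n) (q n)) - v (q n) := fun n => by
    nlinarith [(hmq n).sub_add_le hp₀, gauge4_nonneg (m n)]
  obtain ⟨φ, hφ, hφΩ⟩ := exists_subseq_mem_and_sub_lt hΩo hcpt hf husc hvlsc
    (fun p hp => (hbdry p hp).1) hm (fun n => (hmq n).hmul_mem) (fun n => (hmq n).mem)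
    (sub_pos.2 hlt) hθ
  have hesc : ∀ k, ∃ η ∈ Ω, v η ≤ K - θ ∧ hmul (m (φ k)) η ∉ Ω := fun k => by
    obtain ⟨hpΩ, hqΩ, hfk⟩ := hφΩ k
    obtain ⟨η, hη, hvη, hmη⟩ := (hmq (φ k)).exists_hmul_not_mem subset_closure hΩo hsub hsuper
      hpΩ hqΩ (by linarith [hθ (φ k)])
    exact ⟨η, hη, by linarith [hθ (φ k), huK _ (hmq (φ k)).hmul_mem], hmη⟩
  choose η hηΩ hvη hmη using hesc
  obtain ⟨y, hy, hvy⟩ := exists_mem_frontier_le_of_hmul_not_mem hcpt hvlsc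
    (hm.comp hφ.tendsto_atTop) hηΩ hmη hvη
  linarith [(hbdry y hy).2]

/-- Theorem 3.5 (Comparison principle): if `u` is a subsolution and `v` a
supersolution of `u + H(p,u,∇_H u) = f` in a bounded domain `Ω`, with
`u ≤ v = K` on `∂Ω` and `u ≤ K` in `Ω̄`, then `u ≤ v` in `Ω̄`. -/
theorem comparison_principle
    (Ω : Set Heis) (hΩo : IsOpen Ω) (hΩconn : IsConnected Ω)
    (hΩb : Bornology.IsBounded Ω)
    (f : Heis → ℝ) (hf : ContinuousOn f Ω)
    (u v : Heis → ℝ)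
    (husc : UpperSemicontinuousOn u (closure Ω))
    (hvlsc : LowerSemicontinuousOn v (closure Ω))
    (hsub : IsSubSoln Ω f u) (hsuper : IsSuperSoln Ω f v)
    (K : ℝ)
    (hbdry : ∀ p ∈ frontier Ω, u p ≤ v p ∧ v p = K)
    (huK : ∀ p ∈ closure Ω, u p ≤ K) :
    ∀ p ∈ closure Ω, u p ≤ v p :=
  comparison_principle_general Ω hΩo hΩb f hf u v husc hvlsc hsub hsuper K hbdry huK
end
end

section
/- Let E ⊂ ℍ be an open set and f ∈ C(ℍ) satisfy E = {p ∈ ℍ : f(p) < 0}. Assume the h-quasiconvex envelope Q(f) of f (over all of ℍ) exists and is real-valued. Then Q(f) ∈ USC(ℍ) and the h-convex hull of E satisfies co(E) = {p ∈ ℍ : Q(f)(p) < 0}. -/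
noncomputable section

/-!
The sublevel set `{Q(f) < 0}` is h-convex and contains `E`, hence contains `co(E)`. Conversely,
`f ≥ 0` off `co(E)`, so raising `Q(f)` to `max (Q(f)) 0` off the h-convex set `co(E)` gives an
h-quasiconvex minorant of `f`; by maximality `Q(f) ≥ 0` off `co(E)`.

For upper semicontinuity, the regularization `x ↦ limsup_{v → x} Q(f)(v)` is still h-quasiconvex,
because a horizontal segment through `w` can be moved continuously with `w`, and still lies below
the continuous `f`; maximality of `Q(f)` forces it to equal `Q(f)`.
-/

open Filter Topology

lemma isCoboundedUnder_le_nhds {X α : Type*} [TopologicalSpace X] [Preorder α] (u : X → α)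
    (x : X) : IsCoboundedUnder (· ≤ ·) (𝓝 x) u :=
  ⟨u x, fun _ ha => (eventually_map.1 ha).self_of_nhds⟩

lemma hmul_zero (p : Heis) : hmul p 0 = p := by
  ext <;> simp [hmul]

lemma continuous_hmul_const (h : Heis) : Continuous fun v => hmul v h := by
  unfold hmul; fun_prop

lemma hmul_smul_hmul_smul {h : Heis} (hh : h.2.2 = 0) (v : Heis) (s t : ℝ) :
    hmul (hmul v (s • h)) (t • h) = hmul v ((s + t) • h) := by
  ext <;> simp [hmul, hh] <;> ring

lemma one_sub_smul_add_smul_hmul {h : Heis} (hh : h.2.2 = 0) (p : Heis) (l : ℝ) :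
    (1 - l) • p + l • hmul p h = hmul p (l • h) := by
  ext <;> simp [hmul, hh] <;> ring

/-- The segment is `{p · (t • h)}`; as multiples of a horizontal `h` commute, the endpoints
`v · (-l • h)` and `v · ((1 - l) • h)` carry it along continuously with `v`. -/
lemma exists_continuous_hseg_through {p q w : Heis} (hq : q ∈ hplane p) (hw : w ∈ hseg p q) :
    ∃ P Q : Heis → Heis, Continuous P ∧ Continuous Q ∧ P w = p ∧ Q w = q ∧
      ∀ v, Q v ∈ hplane (P v) ∧ v ∈ hseg (P v) (Q v) := by
  obtain ⟨h, hh, rfl⟩ := hq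
  obtain ⟨l, hl0, hl1, rfl⟩ := hw
  refine ⟨fun v => hmul v ((-l) • h), fun v => hmul (hmul v ((-l) • h)) h,
    continuous_hmul_const _, (continuous_hmul_const _).comp (continuous_hmul_const _),
    ?_, ?_, fun v => ⟨⟨h, hh, rfl⟩, l, hl0, hl1, ?_⟩⟩
  · beta_reduce; rw [one_sub_smul_add_smul_hmul hh, hmul_smul_hmul_smul hh]; simp [hmul_zero]
  · beta_reduce; rw [one_sub_smul_add_smul_hmul hh, hmul_smul_hmul_smul hh]; simp [hmul_zero]
  · rw [one_sub_smul_add_smul_hmul hh, hmul_smul_hmul_smul hh]; simp [hmul_zero]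

lemma isHConvex_hconvexHull (E : Set Heis) : IsHConvex (hconvexHull E) :=
  fun _ hp _ hq hqE _ hw => Set.mem_sInter.2 fun D hD =>
    hD.1 _ (Set.mem_sInter.1 hp D hD) _ hq (Set.mem_sInter.1 hqE D hD) _ hw

lemma subset_hconvexHull (E : Set Heis) : E ⊆ hconvexHull E :=
  fun _ hx => Set.mem_sInter.2 fun _ hD => hD.2 hx

lemma hconvexHull_subset {E D : Set Heis} (hD : IsHConvex D) (hED : E ⊆ D) :
    hconvexHull E ⊆ D :=
  Set.sInter_subset_of_mem ⟨hD, hED⟩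

namespace IsHQuasiconvexOn

variable {u : Heis → ℝ}

lemma isHConvex_setOf_lt (hu : IsHQuasiconvexOn Set.univ u) (c : ℝ) :
    IsHConvex {p | u p < c} :=
  fun p hp q hq hqc w hw => (hu p trivial q hq trivial w hw).trans_lt (max_lt hp hqc)

lemma piecewise_max {D : Set Heis} [DecidablePred (· ∈ D)] (hu : IsHQuasiconvexOn Set.univ u)
    (hD : IsHConvex D) (c : ℝ) :
    IsHQuasiconvexOn Set.univ (D.piecewise u fun y => max (u y) c) := by
  intro p _ q hq _ w hw
  have hle : ∀ y, u y ≤ D.piecewise u (fun y => max (u y) c) y := fun y => by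
    by_cases hy : y ∈ D <;> simp [hy]
  have hc : ∀ y ∉ D, c ≤ D.piecewise u (fun y => max (u y) c) y := fun y hy => by simp [hy]
  have huw := (hu p trivial q hq trivial w hw).trans (max_le_max (hle p) (hle q))
  by_cases hwD : w ∈ D
  · simpa [hwD] using huw
  · rw [Set.piecewise_eq_of_notMem _ _ _ hwD]
    refine max_le huw ?_
    by_cases hpD : p ∈ D
    · have hqD : q ∉ D := fun hqD => hwD (hD p hpD q hq hqD w hw)
      exact (hc q hqD).trans (le_max_right _ _)
    · exact (hc p hpD).trans (le_max_left _ _)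

lemma eventually_le_max (hu : IsHQuasiconvexOn Set.univ u) {p q w : Heis} (hq : q ∈ hplane p)
    (hw : w ∈ hseg p q) {a b : ℝ} (hpa : ∀ᶠ v in 𝓝 p, u v ≤ a) (hqb : ∀ᶠ v in 𝓝 q, u v ≤ b) :
    ∀ᶠ v in 𝓝 w, u v ≤ max a b := by
  obtain ⟨P, Q, hP, hQ, hPw, hQw, hPQ⟩ := exists_continuous_hseg_through hq hw
  have hPa : ∀ᶠ v in 𝓝 w, u (P v) ≤ a := (hPw ▸ hP.tendsto w).eventually hpa
  have hQb : ∀ᶠ v in 𝓝 w, u (Q v) ≤ b := (hQw ▸ hQ.tendsto w).eventually hqb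
  filter_upwards [hPa, hQb] with v hva hvb
  exact (hu _ trivial _ (hPQ v).1 trivial v (hPQ v).2).trans (max_le_max hva hvb)

lemma limsup_nhds (hu : IsHQuasiconvexOn Set.univ u)
    (hbdd : ∀ x, IsBoundedUnder (· ≤ ·) (𝓝 x) u) :
    IsHQuasiconvexOn Set.univ fun x => limsup u (𝓝 x) := by
  intro p _ q hq _ w hw
  refine le_of_forall_pos_le_add fun ε hε => ?_
  have hpa := eventually_lt_of_limsup_lt (lt_add_of_pos_right (limsup u (𝓝 p)) hε) (hbdd p)
  have hqb := eventually_lt_of_limsup_lt (lt_add_of_pos_right (limsup u (𝓝 q)) hε) (hbdd q)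
  calc limsup u (𝓝 w)
      ≤ max (limsup u (𝓝 p) + ε) (limsup u (𝓝 q) + ε) :=
        limsup_le_of_le (isCoboundedUnder_le_nhds u w)
          (hu.eventually_le_max hq hw (hpa.mono fun _ => le_of_lt) (hqb.mono fun _ => le_of_lt))
    _ = max (limsup u (𝓝 p)) (limsup u (𝓝 q)) + ε := max_add_add_right _ _ _

end IsHQuasiconvexOn

namespace IsHQCEnvelopeOn

variable {f Qf : Heis → ℝ}

lemma upperSemicontinuous (hQf : IsHQCEnvelopeOn Set.univ f Qf) (hf : Continuous f) :
    UpperSemicontinuous Qf := by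
  obtain ⟨hQC, hQle, hmax⟩ := hQf
  have hbdd : ∀ x, IsBoundedUnder (· ≤ ·) (𝓝 x) Qf := fun x =>
    (hf.tendsto x).isBoundedUnder_le.mono_le (Eventually.of_forall fun y => hQle y trivial)
  have hreg_le : ∀ x, limsup Qf (𝓝 x) ≤ f x := fun x =>
    calc limsup Qf (𝓝 x) ≤ limsup f (𝓝 x) :=
          limsup_le_limsup (Eventually.of_forall fun y => hQle y trivial)
            (isCoboundedUnder_le_nhds Qf x) (hf.tendsto x).isBoundedUnder_le
      _ = f x := (hf.tendsto x).limsup_eq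
  intro x y hxy
  have hreg : limsup Qf (𝓝 x) ≤ Qf x :=
    hmax _ (hQC.limsup_nhds hbdd) (fun x _ => hreg_le x) x trivial
  exact eventually_lt_of_limsup_lt (hreg.trans_lt hxy) (hbdd x)

lemma le_apply_of_notMem (hQf : IsHQCEnvelopeOn Set.univ f Qf) {D : Set Heis} (hD : IsHConvex D)
    {c : ℝ} (hfc : ∀ y ∉ D, c ≤ f y) {x : Heis} (hx : x ∉ D) : c ≤ Qf x := by
  classical
  obtain ⟨hQC, hQle, hmax⟩ := hQf
  have hg : ∀ y ∈ Set.univ, D.piecewise Qf (fun y => max (Qf y) c) y ≤ f y := fun y _ => by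
    by_cases hy : y ∈ D
    · simpa [hy] using hQle y trivial
    · simpa [hy] using ⟨hQle y trivial, hfc y hy⟩
  simpa [hx] using hmax _ (hQC.piecewise_max hD c) hg x trivial

end IsHQCEnvelopeOn

theorem level_set_hconvex_hull_general_general
    (E : Set Heis)
    (f : Heis → ℝ) (hf : Continuous f) (hE : E = {p : Heis | f p < 0})
    (Qf : Heis → ℝ) (hQf : IsHQCEnvelopeOn Set.univ f Qf) :
    UpperSemicontinuous Qf ∧
    hconvexHull E = {p : Heis | Qf p < 0} := by
  subst hE
  refine ⟨hQf.upperSemicontinuous hf, subset_antisymm ?_ fun x hx => ?_⟩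
  · exact hconvexHull_subset (hQf.1.isHConvex_setOf_lt 0)
      fun x hx => (hQf.2.1 x trivial).trans_lt hx
  · by_contra hxE
    have hf_nonneg : ∀ y ∉ hconvexHull {p | f p < 0}, 0 ≤ f y := fun y hy =>
      not_lt.1 fun hy' => hy (subset_hconvexHull _ hy')
    exact (hQf.le_apply_of_notMem (isHConvex_hconvexHull _) hf_nonneg hxE).not_gt hx

/-- Theorem 5.3 (Level set method for the h-convex hull of a general open set):
if `E = {f < 0}` for `f ∈ C(ℍ)` and the h-quasiconvex envelope `Q(f)` over `ℍ`
exists, then `Q(f) ∈ USC(ℍ)` and `co(E) = {p ∈ ℍ : Q(f)(p) < 0}`. -/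
theorem level_set_hconvex_hull_general
    (E : Set Heis) (hEo : IsOpen E)
    (f : Heis → ℝ) (hf : Continuous f) (hE : E = {p : Heis | f p < 0})
    (Qf : Heis → ℝ) (hQf : IsHQCEnvelopeOn Set.univ f Qf) :
    UpperSemicontinuous Qf ∧
    hconvexHull E = {p : Heis | Qf p < 0} :=
  level_set_hconvex_hull_general_general E f hf hE Qf hQf
end
end
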